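/- The tuple of values (val(v))_{v∈V} of a stochastic reachability game is the least fixed point of the Bellman operator V on the complete lattice of functions V → [0,1] ordered pointwise, where V(f)(v) = 1 if v ∈ T, sup{f(u) : v → u} if v ∈ V_Box \ T, inf{f(u) : v → u} if v ∈ V_Diamond \ T, and Σ_{v →^x u} x·f(u) if v ∈ V_Circle \ T. -/

import Mathlib

open scoped Classical

/-- A stochastic game: a directed graph with a total edge relation, vertices
partitioned among player Box, player Diamond and probabilistic vertices,
the latter carrying a positive probability distribution on outgoing edges. -/
structure SGame (V : Type*) where
  edge : V → V → Prop
  total : ∀ v, ∃ u, edge v u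
  isBox : V → Prop
  isDiamond : V → Prop
  isCirc : V → Prop
  cover : ∀ v, isBox v ∨ isDiamond v ∨ isCirc v
  disjBD : ∀ v, ¬ (isBox v ∧ isDiamond v)
  disjBC : ∀ v, ¬ (isBox v ∧ isCirc v)
  disjDC : ∀ v, ¬ (isDiamond v ∧ isCirc v)
  prob : V → V → ℝ
  prob_nonneg : ∀ v u, 0 ≤ prob v u
  prob_supp : ∀ v u, isCirc v → (0 < prob v u ↔ edge v u)
  prob_sum : ∀ v, isCirc v → ∑' u, prob v u = 1

/-- A history-dependent randomized strategy for the player owning the vertices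
satisfying `own`: it assigns to every history `w` and current vertex `v` owned
by the player a probability distribution on the outgoing edges of `v`. -/
structure SGame.Strat {V : Type*} (G : SGame V) (own : V → Prop) where
  f : List V → V → V → ℝ
  nonneg : ∀ w v u, 0 ≤ f w v u
  supp : ∀ w v u, own v → f w v u ≠ 0 → G.edge v u
  sum_one : ∀ w v, own v → ∑' u, f w v u = 1

/-- One-step transition probability of the play `G(σ,π)` given history `w`. -/
noncomputable def SGame.step {V : Type*} (G : SGame V) (σ : G.Strat G.isBox)
    (π : G.Strat G.isDiamond) (w : List V) (v u : V) : ℝ :=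
  if G.isBox v then σ.f w v u else if G.isDiamond v then π.f w v u else G.prob v u

/-- Probability of reaching the target set `T` from `v` within at most `n`
transitions in the play `G(σ,π)`, given that history `w` has elapsed. -/
noncomputable def SGame.reachN {V : Type*} (G : SGame V) (σ : G.Strat G.isBox)
    (π : G.Strat G.isDiamond) (T : Set V) : ℕ → List V → V → ℝ
  | 0, _, v => if v ∈ T then 1 else 0
  | n+1, w, v => if v ∈ T then 1 else
      ∑' u, G.step σ π w v u * SGame.reachN G σ π T n (w ++ [v]) u

/-- Probability `P_v^{σ,π}(Reach(T))` of reaching `T` from `v` in the play `G(σ,π)`. -/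
noncomputable def SGame.reachP {V : Type*} (G : SGame V) (σ : G.Strat G.isBox)
    (π : G.Strat G.isDiamond) (T : Set V) (v : V) : ℝ :=
  ⨆ n, G.reachN σ π T n [] v

/-- The (lower) value `sup_σ inf_π P_v^{σ,π}(Reach(T))` of vertex `v`. -/
noncomputable def SGame.val {V : Type*} (G : SGame V) (T : Set V) (v : V) : ℝ :=
  ⨆ σ : G.Strat G.isBox, ⨅ π : G.Strat G.isDiamond, G.reachP σ π T v

/-- The Bellman operator on functions `V → [0,1]`. -/
noncomputable def SGame.bellman {V : Type*} (G : SGame V) (T : Set V)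
    (f : V → ℝ) : V → ℝ := fun v =>
  if v ∈ T then 1
  else if G.isBox v then sSup (f '' {u | G.edge v u})
  else if G.isDiamond v then sInf (f '' {u | G.edge v u})
  else ∑' u, G.prob v u * f u

/-!
Both halves rest on the one-step decomposition of the reachability probability outside `T`:
`P_v^{σ,π} = ∑_u step(v, u) · P_u^{σ', π'}`, where `σ', π'` are the strategies continued after
the first move. Gluing a first move to `ε`-optimal strategies chosen separately at every successor
turns this identity into the Bellman equation for `val`. For a fixed point `f`, player Diamond
moves at step `k` to a successor whose `f`-value is `ε / 2^(k+1)`-close to the infimum; then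
`f + ε / 2^k` dominates every finite-horizon reachability probability, so `val ≤ f + ε`.
-/

open Set Filter Topology

structure IsProbWeight {α : Type*} (p : α → ℝ) : Prop where
  nonneg : ∀ a, 0 ≤ p a
  tsum_eq_one : ∑' a, p a = 1

namespace IsProbWeight

variable {α : Type*} {p g h : α → ℝ}

theorem summable (hp : IsProbWeight p) : Summable p := by
  by_contra hs
  have h1 := hp.tsum_eq_one
  rw [tsum_eq_zero_of_not_summable hs] at h1
  exact zero_ne_one h1

theorem summable_mul (hp : IsProbWeight p) {a b : ℝ} (hg : ∀ x, g x ∈ Icc a b) :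
    Summable fun x => p x * g x :=
  (hp.summable.mul_right (max |a| |b|)).of_norm_bounded fun x => by
    rw [Real.norm_eq_abs, abs_mul, abs_of_nonneg (hp.nonneg x)]
    exact mul_le_mul_of_nonneg_left (abs_le_max_abs_abs (hg x).1 (hg x).2) (hp.nonneg x)

theorem mul_le_mul_of_ne_zero (hp : IsProbWeight p) {x : α} {a b : ℝ} (hab : p x ≠ 0 → a ≤ b) :
    p x * a ≤ p x * b := by
  by_cases hx : p x = 0
  · simp [hx]
  · exact mul_le_mul_of_nonneg_left (hab hx) (hp.nonneg x)

theorem tsum_mul_add_const (hp : IsProbWeight p) (hg : Summable fun x => p x * g x) (c : ℝ) :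
    ∑' x, p x * (g x + c) = ∑' x, p x * g x + c := by
  simp_rw [mul_add]
  rw [hg.tsum_add (hp.summable.mul_right c), tsum_mul_right, hp.tsum_eq_one, one_mul]

theorem tsum_mul_le_tsum_mul_add (hp : IsProbWeight p) (hg : Summable fun x => p x * g x)
    (hh : Summable fun x => p x * h x) {c : ℝ} (hle : ∀ x, p x ≠ 0 → g x ≤ h x + c) :
    ∑' x, p x * g x ≤ ∑' x, p x * h x + c := by
  rw [← hp.tsum_mul_add_const hh]
  refine hg.tsum_le_tsum (fun x => hp.mul_le_mul_of_ne_zero (hle x)) ?_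
  simpa only [mul_add] using hh.add (hp.summable.mul_right c)

theorem tsum_mul_le_of_le (hp : IsProbWeight p) (hg : Summable fun x => p x * g x) {c : ℝ}
    (hle : ∀ x, p x ≠ 0 → g x ≤ c) : ∑' x, p x * g x ≤ c :=
  calc ∑' x, p x * g x ≤ ∑' x, p x * c :=
        hg.tsum_le_tsum (fun x => hp.mul_le_mul_of_ne_zero (hle x)) (hp.summable.mul_right c)
    _ = c := by rw [tsum_mul_right, hp.tsum_eq_one, one_mul]

theorem le_tsum_mul_of_le (hp : IsProbWeight p) (hg : Summable fun x => p x * g x) {c : ℝ}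
    (hle : ∀ x, p x ≠ 0 → c ≤ g x) : c ≤ ∑' x, p x * g x :=
  calc c = ∑' x, p x * c := by rw [tsum_mul_right, hp.tsum_eq_one, one_mul]
    _ ≤ ∑' x, p x * g x :=
        (hp.summable.mul_right c).tsum_le_tsum (fun x => hp.mul_le_mul_of_ne_zero (hle x)) hg

end IsProbWeight

namespace SGame

variable {V : Type*} {G : SGame V}

namespace Strat

variable {own : V → Prop}

theorem isProbWeight (s : G.Strat own) (w : List V) {v : V} (hv : own v) :
    IsProbWeight (s.f w v) :=
  ⟨s.nonneg w v, s.sum_one w v hv⟩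

noncomputable def pure (c : List V → V → V) (hc : ∀ w v, G.edge v (c w v)) : G.Strat own where
  f w v u := if u = c w v then 1 else 0
  nonneg w v u := by split_ifs <;> norm_num
  supp w v u _ h := by
    split_ifs at h with hu
    · exact hu ▸ hc w v
    · exact absurd rfl h
  sum_one w v _ := tsum_ite_eq (c w v) 1

theorem tsum_pure_mul {c : List V → V → V} (hc : ∀ w v, G.edge v (c w v)) (w : List V) (v : V)
    (g : V → ℝ) : ∑' u, (pure c hc : G.Strat own).f w v u * g u = g (c w v) := by
  simp only [pure, ite_mul, one_mul, zero_mul]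
  exact tsum_ite_eq (c w v) g

noncomputable def toward {v u : V} (h : G.edge v u) : G.Strat own :=
  pure (fun _ x => if x = v then u else (G.total x).choose) fun _ x => by
    split_ifs with hx
    · exact hx ▸ h
    · exact (G.total x).choose_spec

theorem tsum_toward_mul {v u : V} (h : G.edge v u) (g : V → ℝ) :
    ∑' u', (toward h : G.Strat own).f [] v u' * g u' = g u := by
  rw [toward, tsum_pure_mul, if_pos rfl]

def shift (s : G.Strat own) (w₀ : List V) : G.Strat own where
  f w := s.f (w₀ ++ w)
  nonneg w := s.nonneg (w₀ ++ w)
  supp w := s.supp (w₀ ++ w)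
  sum_one w := s.sum_one (w₀ ++ w)

/-- `s₀` makes the first move; after a first move to `u`, the play continues with `s u` as if it
had started at `u`. -/
def branch (s₀ : G.Strat own) (s : V → G.Strat own) : G.Strat own where
  f w v := match w with
    | [] => s₀.f [] v
    | _ :: w => (s (w.headD v)).f w v
  nonneg w v u := by cases w <;> exact Strat.nonneg _ _ _ _
  supp w v u hv := by cases w <;> exact Strat.supp _ _ _ _ hv
  sum_one w v hv := by cases w <;> exact Strat.sum_one _ _ _ hv

theorem shift_branch_f (s₀ : G.Strat own) (s : V → G.Strat own) (x : V) (w : List V) (v : V) :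
    ((s₀.branch s).shift [x]).f w v = (s (w.headD v)).f w v :=
  rfl

end Strat

instance (own : V → Prop) : Nonempty (G.Strat own) :=
  ⟨Strat.pure (fun _ v => (G.total v).choose) fun _ v => (G.total v).choose_spec⟩

variable {T : Set V} {σ : G.Strat G.isBox} {π : G.Strat G.isDiamond} {w : List V} {v : V}

theorem step_of_isBox (hv : G.isBox v) : G.step σ π w v = σ.f w v := by
  funext u
  simp [step, hv]

theorem step_of_isDiamond (hv : G.isDiamond v) : G.step σ π w v = π.f w v := by
  have hnb : ¬ G.isBox v := fun h => G.disjBD v ⟨h, hv⟩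
  funext u
  simp [step, hv, hnb]

theorem step_of_isCirc (hv : G.isCirc v) : G.step σ π w v = G.prob v := by
  have hnb : ¬ G.isBox v := fun h => G.disjBC v ⟨h, hv⟩
  have hnd : ¬ G.isDiamond v := fun h => G.disjDC v ⟨h, hv⟩
  funext u
  simp [step, hnb, hnd]

theorem isProbWeight_step (σ : G.Strat G.isBox) (π : G.Strat G.isDiamond) (w : List V) (v : V) :
    IsProbWeight (G.step σ π w v) := by
  rcases G.cover v with hv | hv | hv
  · rw [step_of_isBox hv]
    exact σ.isProbWeight w hv
  · rw [step_of_isDiamond hv]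
    exact π.isProbWeight w hv
  · rw [step_of_isCirc hv]
    exact ⟨G.prob_nonneg v, G.prob_sum v hv⟩

theorem reachN_zero (w : List V) (v : V) :
    G.reachN σ π T 0 w v = if v ∈ T then 1 else 0 :=
  rfl

theorem reachN_succ (n : ℕ) (w : List V) (v : V) :
    G.reachN σ π T (n + 1) w v =
      if v ∈ T then 1 else ∑' u, G.step σ π w v u * G.reachN σ π T n (w ++ [v]) u :=
  rfl

theorem reachN_of_mem (hv : v ∈ T) (n : ℕ) : G.reachN σ π T n w v = 1 := by
  cases n <;> simp [reachN, hv]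

theorem reachN_mem_Icc (n : ℕ) (w : List V) (v : V) : G.reachN σ π T n w v ∈ Icc 0 1 := by
  induction n generalizing w v with
  | zero => rw [reachN_zero]; split_ifs <;> norm_num
  | succ n ih =>
    rw [reachN_succ]
    split_ifs
    · norm_num
    · have hp := isProbWeight_step σ π w v
      exact ⟨tsum_nonneg fun u => mul_nonneg (hp.nonneg u) (ih _ u).1,
        hp.tsum_mul_le_of_le (hp.summable_mul (ih _)) fun u _ => (ih _ u).2⟩

theorem reachN_le_succ (n : ℕ) (w : List V) (v : V) :
    G.reachN σ π T n w v ≤ G.reachN σ π T (n + 1) w v := by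
  induction n generalizing w v with
  | zero =>
    by_cases hv : v ∈ T
    · simp only [reachN_of_mem hv, le_refl]
    · rw [reachN_succ, if_neg hv, reachN_zero, if_neg hv]
      exact tsum_nonneg fun u => mul_nonneg ((isProbWeight_step σ π w v).nonneg u)
        (reachN_mem_Icc 0 _ u).1
  | succ n ih =>
    rw [reachN_succ, reachN_succ]
    split_ifs
    · rfl
    · have hp := isProbWeight_step σ π w v
      simpa using hp.tsum_mul_le_tsum_mul_add (c := 0) (hp.summable_mul (reachN_mem_Icc n _))
        (hp.summable_mul (reachN_mem_Icc (n + 1) _)) fun u _ => by simpa using ih _ u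

/-- `w.headD v` is the initial vertex of the play, which all later histories share. -/
theorem reachN_congr {σ' : G.Strat G.isBox} {π' : G.Strat G.isDiamond} (n : ℕ) (w : List V)
    (v : V) (h : ∀ w' v', w'.headD v' = w.headD v → G.step σ π w' v' = G.step σ' π' w' v') :
    G.reachN σ π T n w v = G.reachN σ' π' T n w v := by
  induction n generalizing w v with
  | zero => rfl
  | succ n ih =>
    rw [reachN_succ, reachN_succ, h w v rfl]
    refine if_congr Iff.rfl rfl (tsum_congr fun u => congrArg _ (ih _ u fun w' v' hw' => ?_))
    exact h w' v' (by rw [hw']; cases w <;> rfl)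

theorem reachN_shift (w₀ : List V) (n : ℕ) (w : List V) (v : V) :
    G.reachN (σ.shift w₀) (π.shift w₀) T n w v = G.reachN σ π T n (w₀ ++ w) v := by
  induction n generalizing w v with
  | zero => rfl
  | succ n ih =>
    rw [reachN_succ, reachN_succ]
    simp only [ih, List.append_assoc]
    rfl

theorem bddAbove_range_reachN (v : V) : BddAbove (range fun n => G.reachN σ π T n [] v) :=
  ⟨1, by rintro _ ⟨n, rfl⟩; exact (reachN_mem_Icc n [] v).2⟩

theorem tendsto_reachN (v : V) :
    Tendsto (fun n => G.reachN σ π T n [] v) atTop (𝓝 (G.reachP σ π T v)) :=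
  tendsto_atTop_ciSup (monotone_nat_of_le_succ fun n => reachN_le_succ n [] v)
    (bddAbove_range_reachN v)

theorem reachP_mem_Icc (σ : G.Strat G.isBox) (π : G.Strat G.isDiamond) (v : V) :
    G.reachP σ π T v ∈ Icc 0 1 :=
  ⟨(reachN_mem_Icc 0 [] v).1.trans (le_ciSup (bddAbove_range_reachN v) 0),
    ciSup_le fun n => (reachN_mem_Icc n [] v).2⟩

theorem reachP_of_mem (hv : v ∈ T) : G.reachP σ π T v = 1 := by
  simp [reachP, reachN_of_mem hv]

theorem reachP_eq_tsum_step (hv : v ∉ T) :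
    G.reachP σ π T v = ∑' u, G.step σ π [] v u * G.reachP (σ.shift [v]) (π.shift [v]) T u := by
  have hp := isProbWeight_step σ π [] v
  have hsucc : ∀ n, G.reachN σ π T (n + 1) [] v =
      ∑' u, G.step σ π [] v u * G.reachN (σ.shift [v]) (π.shift [v]) T n [] u := fun n => by
    simp [reachN_succ, hv, reachN_shift]
  refine tendsto_nhds_unique ((tendsto_reachN v).comp (tendsto_add_atTop_nat 1)) ?_
  simp only [Function.comp_def, hsucc]
  refine tendsto_tsum_of_dominated_convergence hp.summable
    (fun u => tendsto_const_nhds.mul (tendsto_reachN u)) (Eventually.of_forall fun n u => ?_)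
  rw [Real.norm_eq_abs, abs_mul, abs_of_nonneg (hp.nonneg u),
    abs_of_nonneg (reachN_mem_Icc n [] u).1]
  exact mul_le_of_le_one_right (hp.nonneg u) (reachN_mem_Icc n [] u).2

theorem reachP_shift_branch_box (σ₀ : G.Strat G.isBox) (s : V → G.Strat G.isBox) (x u : V) :
    G.reachP ((σ₀.branch s).shift [x]) π T u = G.reachP (s u) π T u :=
  iSup_congr fun n => reachN_congr n [] u fun w' v' hw' => by
    simp only [List.headD_nil] at hw'
    funext u'
    simp only [step, Strat.shift_branch_f, hw']

theorem reachP_shift_branch_diamond (π₀ : G.Strat G.isDiamond) (s : V → G.Strat G.isDiamond)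
    (x u : V) : G.reachP σ ((π₀.branch s).shift [x]) T u = G.reachP σ (s u) T u :=
  iSup_congr fun n => reachN_congr n [] u fun w' v' hw' => by
    simp only [List.headD_nil] at hw'
    funext u'
    simp only [step, Strat.shift_branch_f, hw']

theorem bddBelow_range_reachP (T : Set V) (σ : G.Strat G.isBox) (v : V) :
    BddBelow (range fun π => G.reachP σ π T v) :=
  ⟨0, by rintro _ ⟨π, rfl⟩; exact (reachP_mem_Icc σ π v).1⟩

theorem iInf_reachP_le_one (T : Set V) (σ : G.Strat G.isBox) (v : V) :
    (⨅ π, G.reachP σ π T v) ≤ 1 :=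
  (ciInf_le (bddBelow_range_reachP T σ v) (Classical.arbitrary _)).trans (reachP_mem_Icc _ _ v).2

theorem iInf_reachP_le_val (T : Set V) (σ : G.Strat G.isBox) (v : V) :
    (⨅ π, G.reachP σ π T v) ≤ G.val T v :=
  le_ciSup (f := fun σ => ⨅ π, G.reachP σ π T v)
    ⟨1, by rintro _ ⟨σ, rfl⟩; exact iInf_reachP_le_one T σ v⟩ σ

theorem val_mem_Icc (v : V) : G.val T v ∈ Icc 0 1 :=
  ⟨(le_ciInf fun π => (reachP_mem_Icc _ π v).1).trans
      (iInf_reachP_le_val T (Classical.arbitrary _) v),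
    ciSup_le fun σ => iInf_reachP_le_one T σ v⟩

theorem val_of_mem (hv : v ∈ T) : G.val T v = 1 := by
  simp [val, reachP_of_mem hv]

theorem le_val_of_le_tsum_step (hv : v ∉ T) (σ₀ : G.Strat G.isBox) {c : ℝ}
    (h : ∀ π, c ≤ ∑' u, G.step σ₀ π [] v u * G.val T u) : c ≤ G.val T v := by
  refine le_of_forall_pos_le_add fun ε hε => ?_
  have hgood : ∀ u, ∃ σ, G.val T u - ε < ⨅ π, G.reachP σ π T u :=
    fun u => exists_lt_of_lt_ciSup (sub_lt_self _ hε)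
  choose s hs using hgood
  suffices c - ε ≤ ⨅ π, G.reachP (σ₀.branch s) π T v by
    linarith [iInf_reachP_le_val T (σ₀.branch s) v]
  refine le_ciInf fun π => ?_
  have hp := isProbWeight_step σ₀ π [] v
  rw [reachP_eq_tsum_step hv]
  simp only [reachP_shift_branch_box]
  change c - ε ≤ ∑' u, G.step σ₀ π [] v u * G.reachP (s u) (π.shift [v]) T u
  have hval : ∀ u, G.val T u ≤ G.reachP (s u) (π.shift [v]) T u + ε := fun u => by
    linarith [hs u, ciInf_le (bddBelow_range_reachP T (s u) u) (π.shift [v])]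
  linarith [h π, hp.tsum_mul_le_tsum_mul_add (hp.summable_mul val_mem_Icc)
    (hp.summable_mul fun u => reachP_mem_Icc (s u) _ u) fun u _ => hval u]

theorem val_le_of_tsum_step_le (hv : v ∉ T) (π₀ : G.Strat G.isDiamond) {c : ℝ}
    (h : ∀ σ, ∑' u, G.step σ π₀ [] v u * G.val T u ≤ c) : G.val T v ≤ c := by
  refine ciSup_le fun σ => le_of_forall_pos_le_add fun ε hε => ?_
  have hgood : ∀ u, ∃ π, G.reachP (σ.shift [v]) π T u < (⨅ π, G.reachP (σ.shift [v]) π T u) + ε :=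
    fun u => exists_lt_of_ciInf_lt (lt_add_of_pos_right _ hε)
  choose s hs using hgood
  have hp := isProbWeight_step σ π₀ [] v
  have hreach : G.reachP σ (π₀.branch s) T v =
      ∑' u, G.step σ π₀ [] v u * G.reachP (σ.shift [v]) (s u) T u := by
    rw [reachP_eq_tsum_step hv]
    simp only [reachP_shift_branch_diamond]
    rfl
  have hval : ∀ u, G.reachP (σ.shift [v]) (s u) T u ≤ G.val T u + ε := fun u => by
    linarith [hs u, iInf_reachP_le_val T (σ.shift [v]) u]
  calc (⨅ π, G.reachP σ π T v) ≤ G.reachP σ (π₀.branch s) T v :=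
        ciInf_le (bddBelow_range_reachP T σ v) _
    _ ≤ ∑' u, G.step σ π₀ [] v u * G.val T u + ε := by
        rw [hreach]
        exact hp.tsum_mul_le_tsum_mul_add (hp.summable_mul fun u => reachP_mem_Icc _ (s u) u)
          (hp.summable_mul val_mem_Icc) fun u _ => hval u
    _ ≤ c + ε := by linarith [h σ]

variable (f : V → ℝ)

theorem bellman_of_mem (hv : v ∈ T) : G.bellman T f v = 1 := by
  simp [bellman, hv]

theorem bellman_of_isBox (hvT : v ∉ T) (hv : G.isBox v) :
    G.bellman T f v = sSup (f '' {u | G.edge v u}) := by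
  simp [bellman, hvT, hv]

theorem bellman_of_isDiamond (hvT : v ∉ T) (hv : G.isDiamond v) :
    G.bellman T f v = sInf (f '' {u | G.edge v u}) := by
  have hnb : ¬ G.isBox v := fun h => G.disjBD v ⟨h, hv⟩
  simp [bellman, hvT, hv, hnb]

theorem bellman_of_isCirc (hvT : v ∉ T) (hv : G.isCirc v) :
    G.bellman T f v = ∑' u, G.prob v u * f u := by
  have hnb : ¬ G.isBox v := fun h => G.disjBC v ⟨h, hv⟩
  have hnd : ¬ G.isDiamond v := fun h => G.disjDC v ⟨h, hv⟩
  simp [bellman, hvT, hnb, hnd]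

variable {f}

theorem bddAbove_image_of_mem_Icc (hf : ∀ u, f u ∈ Icc 0 1) (s : Set V) : BddAbove (f '' s) :=
  ⟨1, by rintro _ ⟨u, -, rfl⟩; exact (hf u).2⟩

theorem bddBelow_image_of_mem_Icc (hf : ∀ u, f u ∈ Icc 0 1) (s : Set V) : BddBelow (f '' s) :=
  ⟨0, by rintro _ ⟨u, -, rfl⟩; exact (hf u).1⟩

variable (f) in
theorem nonempty_image_edge (v : V) : (f '' {u | G.edge v u}).Nonempty :=
  Set.Nonempty.image f (G.total v)

theorem bellman_val_of_isBox (hvT : v ∉ T) (hv : G.isBox v) :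
    G.bellman T (G.val T) v = G.val T v := by
  rw [bellman_of_isBox _ hvT hv]
  refine le_antisymm (csSup_le (nonempty_image_edge _ v) ?_) ?_
  · rintro _ ⟨u, hu, rfl⟩
    exact le_val_of_le_tsum_step hvT (Strat.toward hu) fun π => by
      rw [step_of_isBox hv, Strat.tsum_toward_mul]
  · refine val_le_of_tsum_step_le hvT (Classical.arbitrary _) fun σ => ?_
    have hp := σ.isProbWeight [] hv
    rw [step_of_isBox hv]
    exact hp.tsum_mul_le_of_le (hp.summable_mul val_mem_Icc) fun u hu =>
      le_csSup (bddAbove_image_of_mem_Icc val_mem_Icc _) ⟨u, σ.supp [] v u hv hu, rfl⟩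

theorem bellman_val_of_isDiamond (hvT : v ∉ T) (hv : G.isDiamond v) :
    G.bellman T (G.val T) v = G.val T v := by
  rw [bellman_of_isDiamond _ hvT hv]
  refine le_antisymm ?_ (le_csInf (nonempty_image_edge _ v) ?_)
  · refine le_val_of_le_tsum_step hvT (Classical.arbitrary _) fun π => ?_
    have hp := π.isProbWeight [] hv
    rw [step_of_isDiamond hv]
    exact hp.le_tsum_mul_of_le (hp.summable_mul val_mem_Icc) fun u hu =>
      csInf_le (bddBelow_image_of_mem_Icc val_mem_Icc _) ⟨u, π.supp [] v u hv hu, rfl⟩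
  · rintro _ ⟨u, hu, rfl⟩
    exact val_le_of_tsum_step_le hvT (Strat.toward hu) fun σ => by
      rw [step_of_isDiamond hv, Strat.tsum_toward_mul]

theorem bellman_val_of_isCirc (hvT : v ∉ T) (hv : G.isCirc v) :
    G.bellman T (G.val T) v = G.val T v := by
  rw [bellman_of_isCirc _ hvT hv]
  refine le_antisymm ?_ ?_
  · exact le_val_of_le_tsum_step hvT (Classical.arbitrary _) fun π => by rw [step_of_isCirc hv]
  · exact val_le_of_tsum_step_le hvT (Classical.arbitrary _) fun σ => by rw [step_of_isCirc hv]

theorem bellman_val : G.bellman T (G.val T) = G.val T := by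
  funext v
  by_cases hvT : v ∈ T
  · rw [bellman_of_mem _ hvT, val_of_mem hvT]
  rcases G.cover v with hv | hv | hv
  · exact bellman_val_of_isBox hvT hv
  · exact bellman_val_of_isDiamond hvT hv
  · exact bellman_val_of_isCirc hvT hv

theorem reachN_le_add_of_tsum_step_le (hf : ∀ v, f v ∈ Icc 0 1) (hT : ∀ v ∈ T, f v = 1)
    {ε : ℝ} (hε : 0 ≤ ε)
    (h : ∀ w v, v ∉ T → ∑' u, G.step σ π w v u * f u ≤ f v + ε / 2 ^ (w.length + 1))
    (n : ℕ) (w : List V) (v : V) : G.reachN σ π T n w v ≤ f v + ε / 2 ^ w.length := by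
  have hδ : ∀ k : ℕ, 0 ≤ ε / 2 ^ k := fun k => by positivity
  induction n generalizing w v with
  | zero =>
    rw [reachN_zero]
    split_ifs with hv
    · linarith [hT v hv, hδ w.length]
    · linarith [(hf v).1, hδ w.length]
  | succ n ih =>
    rw [reachN_succ]
    split_ifs with hv
    · linarith [hT v hv, hδ w.length]
    have hp := isProbWeight_step σ π w v
    have hsum := hp.tsum_mul_le_tsum_mul_add (hp.summable_mul (reachN_mem_Icc n _))
      (hp.summable_mul hf) fun u _ => by simpa using ih (w ++ [v]) u
    have hhalf : ε / 2 ^ (w.length + 1) + ε / 2 ^ (w.length + 1) = ε / 2 ^ w.length := by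
      rw [pow_succ]
      ring
    linarith [h w v hv]

theorem exists_strat_tsum_step_le_of_bellman_eq (hf : ∀ v, f v ∈ Icc 0 1)
    (hfix : G.bellman T f = f) {ε : ℝ} (hε : 0 < ε) :
    ∃ π : G.Strat G.isDiamond, ∀ σ w v, v ∉ T →
      ∑' u, G.step σ π w v u * f u ≤ f v + ε / 2 ^ (w.length + 1) := by
  have hpick : ∀ (w : List V) v, ∃ u, G.edge v u ∧
      f u ≤ sInf (f '' {u | G.edge v u}) + ε / 2 ^ (w.length + 1) := fun w v => by
    have hδ : 0 < ε / 2 ^ (w.length + 1) := by positivity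
    obtain ⟨_, ⟨u, hu, rfl⟩, hlt⟩ :=
      exists_lt_of_csInf_lt (nonempty_image_edge f v) (lt_add_of_pos_right _ hδ)
    exact ⟨u, hu, hlt.le⟩
  choose c hc hfc using hpick
  refine ⟨Strat.pure c hc, fun σ w v hvT => ?_⟩
  have hδ : 0 ≤ ε / 2 ^ (w.length + 1) := by positivity
  rcases G.cover v with hv | hv | hv
  · have hp := σ.isProbWeight w hv
    have hsup : sSup (f '' {u | G.edge v u}) = f v := by rw [← bellman_of_isBox f hvT hv, hfix]
    have hle : ∑' u, σ.f w v u * f u ≤ sSup (f '' {u | G.edge v u}) :=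
      hp.tsum_mul_le_of_le (hp.summable_mul hf) fun u hu =>
        le_csSup (bddAbove_image_of_mem_Icc hf _) ⟨u, σ.supp w v u hv hu, rfl⟩
    rw [step_of_isBox hv]
    linarith
  · have hinf : sInf (f '' {u | G.edge v u}) = f v := by
      rw [← bellman_of_isDiamond f hvT hv, hfix]
    rw [step_of_isDiamond hv, Strat.tsum_pure_mul]
    linarith [hfc w v]
  · rw [step_of_isCirc hv, ← bellman_of_isCirc f hvT hv, hfix]
    linarith

theorem val_le_of_bellman_eq (hf : ∀ v, f v ∈ Icc 0 1) (hfix : G.bellman T f = f) (v : V) :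
    G.val T v ≤ f v := by
  have hT : ∀ v ∈ T, f v = 1 := fun v hv => (congrFun hfix v).symm.trans (bellman_of_mem f hv)
  refine le_of_forall_pos_le_add fun ε hε => ?_
  obtain ⟨π, hπ⟩ := exists_strat_tsum_step_le_of_bellman_eq hf hfix hε
  refine ciSup_le fun σ => (ciInf_le (bddBelow_range_reachP T σ v) π).trans (ciSup_le fun n => ?_)
  simpa using reachN_le_add_of_tsum_step_le hf hT hε.le (hπ σ) n [] v

end SGame

/-- The tuple of values of a stochastic reachability game is the least fixed
point of the Bellman operator on the complete lattice of functions
`V → [0,1]` ordered pointwise. -/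
theorem val_is_least_fixed_point_of_bellman {V : Type*} (G : SGame V) (T : Set V) :
    ((∀ v, G.val T v ∈ Set.Icc (0:ℝ) 1) ∧ G.bellman T (G.val T) = G.val T) ∧
      ∀ f : V → ℝ, (∀ v, f v ∈ Set.Icc (0:ℝ) 1) → G.bellman T f = f →
        ∀ v, G.val T v ≤ f v :=
  ⟨⟨SGame.val_mem_Icc, SGame.bellman_val⟩, fun _ hf hfix => SGame.val_le_of_bellman_eq hf hfix⟩
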